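/- arXiv:2309.05211 — 3 statements merged into one kernel-verified Lean document; each statement's English description precedes it below -/
import Mathlib

section
/- If U is an m×m unitary quaternion matrix and V is an n×n unitary quaternion matrix, then their Kronecker product U ⊗ V is an (mn)×(mn) unitary quaternion matrix, i.e., (U ⊗ V)ᴴ (U ⊗ V) = I and (U ⊗ V)(U ⊗ V)ᴴ = I. -/
open Matrix
open scoped Quaternion Kronecker

/-- The Kronecker product of two unitary quaternion matrices is unitary. -/
theorem kronecker_unitary {m n : ℕ}
    (U : Matrix (Fin m) (Fin m) ℍ[ℝ]) (V : Matrix (Fin n) (Fin n) ℍ[ℝ])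
    (hU₁ : Uᴴ * U = 1) (hU₂ : U * Uᴴ = 1)
    (hV₁ : Vᴴ * V = 1) (hV₂ : V * Vᴴ = 1) :
    (U ⊗ₖ V)ᴴ * (U ⊗ₖ V) = 1 ∧ (U ⊗ₖ V) * (U ⊗ₖ V)ᴴ = 1 := by
  have hU1 : ∀ i j, (∑ p, star (U p i) * U p j) = if i = j then (1:ℍ[ℝ]) else 0 := by
    intro i j
    have := congrFun (congrFun hU₁ i) j
    simpa [Matrix.mul_apply, Matrix.conjTranspose_apply, Matrix.one_apply] using this
  have hV1 : ∀ i j, (∑ p, star (V p i) * V p j) = if i = j then (1:ℍ[ℝ]) else 0 := by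
    intro i j
    have := congrFun (congrFun hV₁ i) j
    simpa [Matrix.mul_apply, Matrix.conjTranspose_apply, Matrix.one_apply] using this
  have hU2 : ∀ i j, (∑ p, U i p * star (U j p)) = if i = j then (1:ℍ[ℝ]) else 0 := by
    intro i j
    have := congrFun (congrFun hU₂ i) j
    simpa [Matrix.mul_apply, Matrix.conjTranspose_apply, Matrix.one_apply] using this
  have hV2 : ∀ i j, (∑ p, V i p * star (V j p)) = if i = j then (1:ℍ[ℝ]) else 0 := by
    intro i j
    have := congrFun (congrFun hV₂ i) j
    simpa [Matrix.mul_apply, Matrix.conjTranspose_apply, Matrix.one_apply] using this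
  constructor
  · refine Matrix.ext fun i j => ?_
    rw [Matrix.mul_apply, Matrix.one_apply]
    simp only [Matrix.conjTranspose_apply, Matrix.kroneckerMap_apply, StarMul.star_mul]
    rw [Fintype.sum_prod_type, Finset.sum_comm]
    have step : ∀ q : Fin n,
        (∑ p : Fin m, star (V q i.2) * star (U p i.1) * (U p j.1 * V q j.2))
          = star (V q i.2) * (∑ p : Fin m, star (U p i.1) * U p j.1) * V q j.2 := by
      intro q
      rw [Finset.mul_sum, Finset.sum_mul]
      exact Finset.sum_congr rfl fun p _ => by simp [mul_assoc]
    simp only [step, hU1]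
    by_cases h1 : i.1 = j.1
    · simp [h1, hV1, Prod.ext_iff]
    · simp [h1, Prod.ext_iff]
  · refine Matrix.ext fun i j => ?_
    rw [Matrix.mul_apply, Matrix.one_apply]
    simp only [Matrix.conjTranspose_apply, Matrix.kroneckerMap_apply, StarMul.star_mul]
    rw [Fintype.sum_prod_type]
    have step : ∀ p : Fin m,
        (∑ q : Fin n, U i.1 p * V i.2 q * (star (V j.2 q) * star (U j.1 p)))
          = U i.1 p * (∑ q : Fin n, V i.2 q * star (V j.2 q)) * star (U j.1 p) := by
      intro p
      rw [Finset.mul_sum, Finset.sum_mul]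
      exact Finset.sum_congr rfl fun q _ => by simp [mul_assoc]
    simp only [step, hV2]
    by_cases h2 : i.2 = j.2
    · simp [h2, hU2, Prod.ext_iff]
    · simp [h2, Prod.ext_iff]
end

section
/- Let D be an m×n real matrix (coerced into ℍ), let W ∈ ℍ^{n×n} be a unitary quaternion matrix, and let Z ∈ ℍ^{p×n} be a quaternion matrix with orthonormal columns (Zᴴ Z = I_n). Set M = D Wᵀ Zᴴ ∈ ℍ^{m×p}. Then the entrywise real part of M Mᴴ equals the real matrix D Dᵀ: Re(M Mᴴ) = D Dᵀ. -/
open Matrix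
open scoped Quaternion

/-!
After cancelling `Zᴴ * Z = 1` one is left with `D * (Wᵀ * Wᵀᴴ) * Dᵀ`. Over `ℍ` the matrix
`Wᵀ * Wᵀᴴ` need not be the identity, but its real part is: since `re (a * b) = re (b * a)`,
taking real parts turns `Wᵀ * Wᵀᴴ` into the transpose of `Wᴴ * W = 1`. Real matrices can be
pulled out of the real part on either side, which gives `D * Dᵀ`.
-/

namespace Quaternion

variable {R : Type*} [CommRing R]

theorem re_mul_comm (a b : ℍ[R]) : (a * b).re = (b * a).re := by
  simp only [re_mul]; ring

theorem re_sum {ι : Type*} (s : Finset ι) (f : ι → ℍ[R]) :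
    (∑ i ∈ s, f i).re = ∑ i ∈ s, (f i).re :=
  map_sum (QuaternionAlgebra.reₗ (-1 : R) 0 (-1)) f s

end Quaternion

namespace Matrix

variable {R : Type*} [CommRing R] {l m n : Type*}

theorem conjTranspose_map_coe (D : Matrix m n R) :
    (D.map ((↑) : R → ℍ[R]))ᴴ = Dᵀ.map (↑) := by
  ext i j : 1
  simp [Quaternion.star_coe]

/-- `Matrix.map_apply` does not rewrite here: `QuaternionAlgebra.re` accepts an `ℍ[R]` entry
only after `Quaternion` is unfolded, which `rw` and `simp` do not do. -/
theorem map_re_apply (A : Matrix m n ℍ[R]) (i : m) (j : n) :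
    A.map QuaternionAlgebra.re i j = (A i j).re :=
  rfl

theorem map_re_one [DecidableEq n] : (1 : Matrix n n ℍ[R]).map QuaternionAlgebra.re = 1 := by
  ext i j
  rw [map_re_apply, one_apply, one_apply]
  split_ifs <;> rfl

variable [Fintype m]

theorem map_re_transpose_mul_transpose (A : Matrix l m ℍ[R]) (B : Matrix m n ℍ[R]) :
    (Bᵀ * Aᵀ).map QuaternionAlgebra.re = ((A * B).map QuaternionAlgebra.re)ᵀ := by
  ext i j
  simp only [map_re_apply, transpose_apply, mul_apply, Quaternion.re_sum]
  exact Finset.sum_congr rfl fun k _ => Quaternion.re_mul_comm _ _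

theorem map_re_coe_mul (D : Matrix l m R) (X : Matrix m n ℍ[R]) :
    (D.map ((↑) : R → ℍ[R]) * X).map QuaternionAlgebra.re = D * X.map QuaternionAlgebra.re := by
  ext i j
  simp only [map_re_apply, mul_apply, Matrix.map_apply, Quaternion.re_sum,
    Quaternion.coe_mul_eq_smul, Quaternion.re_smul, smul_eq_mul]

theorem map_re_mul_coe (X : Matrix l m ℍ[R]) (D : Matrix m n R) :
    (X * D.map ((↑) : R → ℍ[R])).map QuaternionAlgebra.re = X.map QuaternionAlgebra.re * D := by
  ext i j
  simp only [map_re_apply, mul_apply, Matrix.map_apply, Quaternion.re_sum,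
    Quaternion.mul_coe_eq_smul, Quaternion.re_smul, smul_eq_mul, mul_comm]

end Matrix

theorem re_selfConjTranspose_of_real_transpose_unitary_general {m n p : ℕ}
    (D : Matrix (Fin m) (Fin n) ℝ) (W : Matrix (Fin n) (Fin n) ℍ[ℝ])
    (Z : Matrix (Fin p) (Fin n) ℍ[ℝ])
    (hW₁ : Wᴴ * W = 1) (hZ : Zᴴ * Z = 1) :
    ((D.map (fun x : ℝ => (x : ℍ[ℝ])) * Wᵀ * Zᴴ) *
        (D.map (fun x : ℝ => (x : ℍ[ℝ])) * Wᵀ * Zᴴ)ᴴ).map QuaternionAlgebra.re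
      = D * Dᵀ := by
  set D' := D.map (fun x : ℝ => (x : ℍ[ℝ]))
  have hZ_cancel : (D' * Wᵀ * Zᴴ) * (D' * Wᵀ * Zᴴ)ᴴ = D' * (Wᵀ * Wᵀᴴ) * D'ᴴ := by
    simp only [conjTranspose_mul, conjTranspose_conjTranspose, Matrix.mul_assoc]
    rw [← Matrix.mul_assoc Zᴴ, hZ, Matrix.one_mul]
  have hW_re : (Wᵀ * Wᵀᴴ).map QuaternionAlgebra.re = 1 := by
    rw [conjTranspose_transpose_eq_transpose_conjTranspose, map_re_transpose_mul_transpose, hW₁,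
      map_re_one, transpose_one]
  rw [hZ_cancel, conjTranspose_map_coe, map_re_mul_coe, map_re_coe_mul, hW_re, Matrix.mul_one]

/-- Let `D` be a real matrix (coerced into `ℍ`), `W` a unitary quaternion matrix,
and `Z` a quaternion matrix with orthonormal columns.  Then for
`M = D Wᵀ Zᴴ` the entrywise real part of `M Mᴴ` equals `D Dᵀ`. -/
theorem re_selfConjTranspose_of_real_transpose_unitary {m n p : ℕ}
    (D : Matrix (Fin m) (Fin n) ℝ) (W : Matrix (Fin n) (Fin n) ℍ[ℝ])
    (Z : Matrix (Fin p) (Fin n) ℍ[ℝ])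
    (hW₁ : Wᴴ * W = 1) (hW₂ : W * Wᴴ = 1) (hZ : Zᴴ * Z = 1) :
    ((D.map (fun x : ℝ => (x : ℍ[ℝ])) * Wᵀ * Zᴴ) *
        (D.map (fun x : ℝ => (x : ℍ[ℝ])) * Wᵀ * Zᴴ)ᴴ).map QuaternionAlgebra.re
      = D * Dᵀ :=
  re_selfConjTranspose_of_real_transpose_unitary_general D W Z hW₁ hZ
end

section
/- Left mode products along distinct modes do not commute in general over the quaternions: there exist quaternion matrices U₁, U₂ ∈ ℍ^{2×2} and a second-order quaternion tensor T ∈ ℍ^{2×2} such that U₁ ×₁ᴸ (U₂ ×₂ᴸ T) ≠ U₂ ×₂ᴸ (U₁ ×₁ᴸ T). -/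
open Matrix
open scoped Quaternion

/-- The left mode-`1` product of a second-order quaternion tensor (a matrix) `T`
with a quaternion matrix `U`: `(U ×₁ᴸ T)_{j i₂} = Σ_{i₁} u_{j i₁} t_{i₁ i₂}`. -/
noncomputable def lprod1 {I₁ I₂ J : ℕ} (U : Matrix (Fin J) (Fin I₁) ℍ[ℝ])
    (T : Matrix (Fin I₁) (Fin I₂) ℍ[ℝ]) : Matrix (Fin J) (Fin I₂) ℍ[ℝ] :=
  Matrix.of fun j i₂ => ∑ i₁, U j i₁ * T i₁ i₂

/-- The left mode-`2` product of a second-order quaternion tensor (a matrix) `T`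
with a quaternion matrix `U`: `(U ×₂ᴸ T)_{i₁ j} = Σ_{i₂} u_{j i₂} t_{i₁ i₂}`. -/
noncomputable def lprod2 {I₁ I₂ J : ℕ} (U : Matrix (Fin J) (Fin I₂) ℍ[ℝ])
    (T : Matrix (Fin I₁) (Fin I₂) ℍ[ℝ]) : Matrix (Fin I₁) (Fin J) ℍ[ℝ] :=
  Matrix.of fun i₁ j => ∑ i₂, U j i₂ * T i₁ i₂

/-!
On matrix units both mode products just multiply the single nonzero entries from the left, so
`single a ×₁ᴸ (single b ×₂ᴸ single 1) = single (a * b)` while the other order gives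
`single (b * a)`. Any two non-commuting quaternions, such as `i` and `j`, therefore separate
the two orders.
-/

theorem Quaternion.exists_mul_ne_mul : ∃ a b : ℍ[ℝ], a * b ≠ b * a := by
  -- `let` keeps the literals at type `ℍ[ℝ]`, so that the `Quaternion` multiplication lemmas apply.
  let i : ℍ[ℝ] := ⟨0, 1, 0, 0⟩
  let j : ℍ[ℝ] := ⟨0, 0, 1, 0⟩
  refine ⟨i, j, fun h => ?_⟩
  have hk := congrArg QuaternionAlgebra.imK h
  rw [Quaternion.imK_mul, Quaternion.imK_mul] at hk
  norm_num [i, j] at hk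

theorem lprod1_single_single {I₁ I₂ J : ℕ} (j : Fin J) (i : Fin I₁) (k : Fin I₂) (a c : ℍ[ℝ]) :
    lprod1 (single j i a) (single i k c) = single j k (a * c) := by
  refine Matrix.ext fun j' k' => ?_
  by_cases hj : j = j' <;> by_cases hk : k = k' <;> simp [lprod1, single_apply, hj, hk]

theorem lprod2_single_single {I₁ I₂ J : ℕ} (l : Fin J) (i : Fin I₁) (k : Fin I₂) (b c : ℍ[ℝ]) :
    lprod2 (single l k b) (single i k c) = single i l (b * c) := by
  refine Matrix.ext fun i' l' => ?_
  by_cases hi : i = i' <;> by_cases hl : l = l' <;> simp [lprod2, single_apply, hi, hl]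

/-- Left mode products along distinct modes do not commute in general over the
quaternions. -/
theorem exists_lprod_modes_not_comm :
    ∃ (U₁ U₂ T : Matrix (Fin 2) (Fin 2) ℍ[ℝ]),
      lprod1 U₁ (lprod2 U₂ T) ≠ lprod2 U₂ (lprod1 U₁ T) := by
  obtain ⟨a, b, hab⟩ := Quaternion.exists_mul_ne_mul
  refine ⟨single 0 0 a, single 0 0 b, single 0 0 1, fun h => hab ?_⟩
  rw [lprod2_single_single, lprod1_single_single, lprod1_single_single,
    lprod2_single_single] at h
  simpa using congrFun (congrFun h 0) 0
end
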